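/- For every natural number i, there exists a polynomial P with rational coefficients of degree exactly i and leading coefficient 8^i / i! such that r_{k,2k+i} = P(k) for every integer k ≥ i+1. -/

import Mathlib

/-- Integer binomial coefficient with the convention
`C(a,b) = a!/(b!(a-b)!)` if `0 ≤ b ≤ a` and `C(a,b) = 0` otherwise. -/
def ichoose (a b : ℤ) : ℤ := if 0 ≤ b ∧ b ≤ a then (a.toNat.choose b.toNat : ℤ) else 0

/-- The Delannoy numbers `D(n,m) = ∑_{k=0}^m C(m,k) C(n+m-k, m)`. -/
def delannoy (n m : ℕ) : ℕ :=
  ∑ k ∈ Finset.range (m + 1), Nat.choose m k * Nat.choose (n + m - k) m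

/-- `h k n = ∑_{i=0}^{k-1} D(k-1-i, i) C(n-i+k-2, 2k-2)` is the number of
column-convex polyominoes with `k` columns and area `n`. -/
def ccPoly (k n : ℕ) : ℤ :=
  ∑ i ∈ Finset.range k,
    (delannoy (k - 1 - i) i : ℤ) * ichoose ((n : ℤ) - i + k - 2) (2 * (k : ℤ) - 2)

/-- `r k m = ∑_{i=k}^{m-k} h_{k,i} h_{k,m-i}` is the number of plateau polycubes
of width `k` and lateral area `m`. -/
def plateau (k m : ℕ) : ℤ :=
  ∑ i ∈ Finset.Icc k (m - k), ccPoly k i * ccPoly k (m - i)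

/-!
For `k > j` only the terms `s ≤ j` of `h_{k,k+j}` survive, and
`h_{k,k+j} = ∑_{s ≤ j} D(k-1-s, s) C(2k-2+j-s, j-s)`. As polynomials in `k`, `D(k-1-s, s)` has
degree `s` with top coefficient `2^s/s!` and `C(2k-2+b, b)` has degree `b` with top coefficient
`2^b/b!`; the exponential convolution `∑ x^a/a! · y^b/b! = (x+y)^n/n!` over `a + b = n` then shows
that `h_{k,k+j}` has degree `j` and top coefficient `4^j/j!`. Since
`r_{k,2k+i} = ∑_{a ≤ i} h_{k,k+a} h_{k,k+i-a}`, the same convolution gives `8^i/i!`.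
-/

open Finset Polynomial
open scoped Nat

lemma ichoose_natCast (a b : ℕ) : ichoose a b = a.choose b := by
  unfold ichoose
  by_cases h : b ≤ a
  · rw [if_pos ⟨b.cast_nonneg, by exact_mod_cast h⟩]
    simp
  · rw [if_neg (by omega), Nat.choose_eq_zero_of_lt (by omega), Nat.cast_zero]

lemma ichoose_eq_zero_of_lt {a b : ℤ} (h : a < b) : ichoose a b = 0 :=
  if_neg (by omega)

lemma sum_range_pow_div_factorial_mul {K : Type*} [Field K] [CharZero K] (x y : K) (n : ℕ) :
    ∑ a ∈ range (n + 1), x ^ a / a ! * (y ^ (n - a) / (n - a)!) = (x + y) ^ n / n ! := by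
  have h := congrArg (PowerSeries.coeff n) (PowerSeries.exp_mul_exp_eq_exp_add x y)
  simp only [PowerSeries.coeff_mul, PowerSeries.coeff_rescale, PowerSeries.coeff_exp,
    Nat.sum_antidiagonal_eq_sum_range_succ_mk, map_div₀, map_one, map_natCast] at h
  simpa only [mul_one_div] using h

namespace Polynomial

variable {R : Type*} [CommSemiring R]

def HasTopCoeff (p : R[X]) (d : ℕ) (c : R) : Prop :=
  p.natDegree ≤ d ∧ p.coeff d = c

lemma Monic.hasTopCoeff {p : R[X]} (hp : p.Monic) : p.HasTopCoeff p.natDegree 1 :=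
  ⟨le_rfl, hp.coeff_natDegree⟩

lemma hasTopCoeff_C_mul_X_add_C (a b : R) : HasTopCoeff (C a * X + C b) 1 a :=
  ⟨natDegree_linear_le, by simp⟩

lemma hasTopCoeff_X_add_C (b : R) : HasTopCoeff (X + C b) 1 1 := by
  simpa using hasTopCoeff_C_mul_X_add_C (1 : R) b

namespace HasTopCoeff

variable {p q : R[X]} {d e : ℕ} {c a : R}

lemma mul (hp : HasTopCoeff p d c) (hq : HasTopCoeff q e a) :
    HasTopCoeff (p * q) (d + e) (c * a) :=
  ⟨natDegree_mul_le_of_le hp.1 hq.1, by rw [coeff_mul_add_eq_of_natDegree_le hp.1 hq.1, hp.2, hq.2]⟩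

lemma C_mul (hp : HasTopCoeff p d c) (r : R) : HasTopCoeff (C r * p) d (r * c) :=
  ⟨(natDegree_C_mul_le r p).trans hp.1, by rw [coeff_C_mul, hp.2]⟩

lemma sum {ι : Type*} (s : Finset ι) {f : ι → R[X]} {c : ι → R}
    (h : ∀ i ∈ s, HasTopCoeff (f i) d (c i)) : HasTopCoeff (∑ i ∈ s, f i) d (∑ i ∈ s, c i) :=
  ⟨natDegree_sum_le_of_forall_le s f fun i hi => (h i hi).1,
    by rw [finsetSum_coeff]; exact sum_congr rfl fun i hi => (h i hi).2⟩

lemma comp (hp : HasTopCoeff p d c) (hq : HasTopCoeff q 1 a) :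
    HasTopCoeff (p.comp q) d (c * a ^ d) := by
  refine ⟨natDegree_comp_le.trans (by simpa using Nat.mul_le_mul hp.1 hq.1), ?_⟩
  have hlow : ∀ i < d, (q ^ i).coeff d = 0 := fun i hi =>
    coeff_eq_zero_of_natDegree_lt <| natDegree_pow_le.trans_lt <| by nlinarith [hq.1]
  have htop : (q ^ d).coeff d = a ^ d := by
    simpa [hq.2] using coeff_pow_of_natDegree_le (m := d) hq.1
  have hexpand : p.comp q = ∑ i ∈ range (d + 1), C (p.coeff i) * q ^ i := by
    conv_lhs => rw [p.as_sum_range' (d + 1) (Nat.lt_succ_of_le hp.1)]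
    simp only [sum_comp, monomial_comp]
  rw [hexpand, finsetSum_coeff, sum_range_succ, coeff_C_mul, htop, hp.2,
    sum_eq_zero fun i hi => by rw [coeff_C_mul, hlow i (mem_range.1 hi), mul_zero], zero_add]

lemma natDegree_eq (hp : HasTopCoeff p d c) (hc : c ≠ 0) : p.natDegree = d :=
  natDegree_eq_of_le_of_coeff_ne_zero hp.1 (hp.2 ▸ hc)

lemma degree_eq (hp : HasTopCoeff p d c) (hc : c ≠ 0) : p.degree = d :=
  degree_eq_of_le_of_coeff_ne_zero (degree_le_of_natDegree_le hp.1) (hp.2 ▸ hc)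

lemma leadingCoeff_eq (hp : HasTopCoeff p d c) (hc : c ≠ 0) : p.leadingCoeff = c := by
  rw [leadingCoeff, hp.natDegree_eq hc, hp.2]

lemma sum_range_mul_sub {K : Type*} [Field K] [CharZero K] {p q : ℕ → K[X]} {x y : K}
    (hp : ∀ a, HasTopCoeff (p a) a (x ^ a / a !)) (hq : ∀ b, HasTopCoeff (q b) b (y ^ b / b !))
    (n : ℕ) : HasTopCoeff (∑ a ∈ range (n + 1), p a * q (n - a)) n ((x + y) ^ n / n !) := by
  rw [← sum_range_pow_div_factorial_mul]
  refine HasTopCoeff.sum _ fun a ha => ?_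
  simpa [Nat.add_sub_cancel' (mem_range_succ_iff.1 ha)] using (hp a).mul (hq (n - a))

end HasTopCoeff

end Polynomial

noncomputable def choosePoly (m : ℕ) : ℚ[X] :=
  C (1 / m ! : ℚ) * descPochhammer ℚ m

lemma choosePoly_hasTopCoeff (m : ℕ) : (choosePoly m).HasTopCoeff m (1 / m !) := by
  have h := (monic_descPochhammer ℚ m).hasTopCoeff.C_mul (1 / m ! : ℚ)
  rwa [descPochhammer_natDegree, mul_one] at h

lemma choosePoly_eval_natCast (m n : ℕ) : (choosePoly m).eval (n : ℚ) = n.choose m := by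
  rw [choosePoly, eval_mul, eval_C, descPochhammer_eval_eq_descFactorial,
    Nat.descFactorial_eq_factorial_mul_choose, Nat.cast_mul]
  field_simp

noncomputable def delannoyPoly (m : ℕ) : ℚ[X] :=
  ∑ t ∈ range (m + 1), C (m.choose t : ℚ) * (choosePoly m).comp (X + C ((m : ℚ) - t))

lemma delannoyPoly_hasTopCoeff (m : ℕ) : (delannoyPoly m).HasTopCoeff m (2 ^ m / m !) := by
  have h := HasTopCoeff.sum (range (m + 1)) fun t _ =>
    ((choosePoly_hasTopCoeff m).comp (hasTopCoeff_X_add_C ((m : ℚ) - t))).C_mul (m.choose t : ℚ)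
  rwa [← sum_mul, ← Nat.cast_sum, Nat.sum_range_choose, one_pow, mul_one, Nat.cast_pow,
    Nat.cast_ofNat, mul_one_div] at h

lemma delannoyPoly_eval_natCast (m n : ℕ) : (delannoyPoly m).eval (n : ℚ) = delannoy n m := by
  rw [delannoyPoly, eval_finsetSum, delannoy, Nat.cast_sum]
  refine sum_congr rfl fun t ht => ?_
  have htm : t ≤ m := mem_range_succ_iff.1 ht
  have harg : (n : ℚ) + (m - t) = (n + m - t : ℕ) := by
    rw [Nat.cast_sub (htm.trans (Nat.le_add_left m n))]
    push_cast
    ring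
  rw [eval_mul, eval_C, eval_comp, eval_add, eval_X, eval_C, harg, choosePoly_eval_natCast,
    Nat.cast_mul]

lemma ccPoly_add_eq_sum {j k : ℕ} (hk : j + 1 ≤ k) :
    ccPoly k (k + j) = ∑ s ∈ range (j + 1),
      (delannoy (k - 1 - s) s : ℤ) * ((2 * k - 2 + (j - s)).choose (j - s) : ℤ) := by
  rw [ccPoly, ← sum_subset (range_subset_range.2 hk)]
  · refine sum_congr rfl fun s hs => ?_
    have hsj : s ≤ j := mem_range_succ_iff.1 hs
    have htop : ((k + j : ℕ) : ℤ) - s + k - 2 = ((2 * k - 2 + (j - s) : ℕ) : ℤ) := by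
      push_cast [Nat.cast_sub hsj]
      omega
    have hbot : 2 * (k : ℤ) - 2 = ((2 * k - 2 : ℕ) : ℤ) := by omega
    rw [htop, hbot, ichoose_natCast, Nat.choose_symm_add]
  · intro s _ hs
    rw [ichoose_eq_zero_of_lt (by simp only [mem_range] at hs; push_cast; omega), mul_zero]

noncomputable def columnConvexPoly (j : ℕ) : ℚ[X] :=
  ∑ s ∈ range (j + 1), (delannoyPoly s).comp (X + C (-(s + 1 : ℚ))) *
    (choosePoly (j - s)).comp (C 2 * X + C (((j - s : ℕ) : ℚ) - 2))

lemma columnConvexPoly_hasTopCoeff (j : ℕ) :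
    (columnConvexPoly j).HasTopCoeff j (4 ^ j / j !) := by
  have hp (s : ℕ) : ((delannoyPoly s).comp (X + C (-(s + 1 : ℚ)))).HasTopCoeff s (2 ^ s / s !) := by
    simpa only [one_pow, mul_one] using
      (delannoyPoly_hasTopCoeff s).comp (hasTopCoeff_X_add_C (-(s + 1 : ℚ)))
  have hq (b : ℕ) :
      ((choosePoly b).comp (C 2 * X + C ((b : ℚ) - 2))).HasTopCoeff b (2 ^ b / b !) := by
    simpa only [one_div_mul_eq_div] using
      (choosePoly_hasTopCoeff b).comp (hasTopCoeff_C_mul_X_add_C 2 ((b : ℚ) - 2))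
  have h := HasTopCoeff.sum_range_mul_sub hp hq j
  rw [show (2 : ℚ) + 2 = 4 by norm_num] at h
  exact h

lemma columnConvexPoly_eval_natCast {j k : ℕ} (hk : j + 1 ≤ k) :
    (columnConvexPoly j).eval (k : ℚ) = ccPoly k (k + j) := by
  rw [ccPoly_add_eq_sum hk, columnConvexPoly, eval_finsetSum]
  push_cast
  refine sum_congr rfl fun s hs => ?_
  have hsj : s ≤ j := mem_range_succ_iff.1 hs
  have hd : (k : ℚ) + -(s + 1) = (k - 1 - s : ℕ) := by
    rw [Nat.cast_sub (by omega), Nat.cast_sub (by omega)]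
    push_cast
    ring
  have hc : 2 * (k : ℚ) + ((j - s : ℕ) - 2) = (2 * k - 2 + (j - s) : ℕ) := by
    push_cast [Nat.cast_sub hsj, Nat.cast_sub (show 2 ≤ 2 * k by omega)]
    ring
  simp only [eval_mul, eval_comp, eval_add, eval_X, eval_C]
  rw [hd, hc, delannoyPoly_eval_natCast, choosePoly_eval_natCast]

lemma plateau_two_mul_add (k i : ℕ) :
    plateau k (2 * k + i) = ∑ a ∈ range (i + 1), ccPoly k (k + a) * ccPoly k (k + (i - a)) := by
  rw [plateau, show 2 * k + i - k = k + i by omega, ← Ico_add_one_right_eq_Icc,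
    sum_Ico_eq_sum_range, show k + i + 1 - k = i + 1 by omega]
  refine sum_congr rfl fun a ha => ?_
  rw [show 2 * k + i - (k + a) = k + (i - a) by have := mem_range_succ_iff.1 ha; omega]

noncomputable def plateauPoly (i : ℕ) : ℚ[X] :=
  ∑ a ∈ range (i + 1), columnConvexPoly a * columnConvexPoly (i - a)

lemma plateauPoly_hasTopCoeff (i : ℕ) : (plateauPoly i).HasTopCoeff i (8 ^ i / i !) := by
  have h := HasTopCoeff.sum_range_mul_sub columnConvexPoly_hasTopCoeff
    columnConvexPoly_hasTopCoeff i
  rwa [show (4 : ℚ) + 4 = 8 by norm_num] at h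

lemma plateauPoly_eval_natCast {i k : ℕ} (hk : i + 1 ≤ k) :
    (plateauPoly i).eval (k : ℚ) = plateau k (2 * k + i) := by
  rw [plateau_two_mul_add, plateauPoly, eval_finsetSum]
  push_cast
  refine sum_congr rfl fun a ha => ?_
  have hai := mem_range_succ_iff.1 ha
  rw [eval_mul, columnConvexPoly_eval_natCast (by omega), columnConvexPoly_eval_natCast (by omega)]

/-- For every `i`, `r_{k,2k+i}` is a polynomial in `k` of degree exactly `i` with
leading coefficient `8ⁱ/i!`, for all `k ≥ i+1`. -/
theorem plateau_polynomial (i : ℕ) :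
    ∃ P : Polynomial ℚ, P.degree = i ∧ P.leadingCoeff = 8 ^ i / (Nat.factorial i : ℚ) ∧
      ∀ k : ℕ, i + 1 ≤ k → (plateau k (2 * k + i) : ℚ) = P.eval (k : ℚ) := by
  have hP := plateauPoly_hasTopCoeff i
  have hc : (8 ^ i / i ! : ℚ) ≠ 0 := by positivity
  exact ⟨plateauPoly i, hP.degree_eq hc, hP.leadingCoeff_eq hc,
    fun k hk => (plateauPoly_eval_natCast hk).symm⟩
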